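/- arXiv:1209.3378 — 6 statements merged into one kernel-verified Lean document; each statement's English description precedes it below -/
import Mathlib

section
/- Symmetrization lemma: let Γ be a countable group, μ a symmetric probability measure on Γ, and (B,ν) a probability space equipped with a measurable action of Γ such that, for every γ ∈ Γ, the pushforward measure (γ⁻¹)_*ν is absolutely continuous with respect to ν, with Radon–Nikodym derivative c(γ,·) = d((γ⁻¹)_*ν)/dν. Let f : Γ × B → ℝ be measurable in the second variable, satisfy the additive cocycle identity f(γγ',ξ) = f(γ, γ'ξ) + f(γ',ξ) for all γ, γ' ∈ Γ and ξ ∈ B, and be integrable in the sense that Σ_γ μ(γ)·∫_B |f(γ,ξ)| dν(ξ) < ∞. Then Σ_γ μ(γ)·∫_B f(γ,ξ) dν(ξ) = Σ_γ μ(γ)·∫_B f(γ,ξ)·(1−c(γ,ξ))/2 dν(ξ). -/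
open MeasureTheory

/-!
Write `a γ = ∫ f(γ,·) dν`. Changing variables along `ξ ↦ γ⁻¹ξ` and using the cocycle identity
`f(γ, γ⁻¹ξ) = -f(γ⁻¹, ξ)` gives `∫ f(γ,·) c(γ,·) dν = -a(γ⁻¹)`, so the right-hand side is
`∑ μ(γ) (a γ + a γ⁻¹)/2`. Reindexing by `γ ↦ γ⁻¹`, which preserves the symmetric `μ`, shows that
this equals `∑ μ(γ) a γ`.
-/

section Cocycle

variable {G α M : Type*} [Group G] [MulAction G α] [AddGroup M] {f : G → α → M}

lemma cocycle_one (hf : ∀ g h x, f (g * h) x = f g (h • x) + f h x) (x : α) : f 1 x = 0 := by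
  simpa using hf 1 1 x

lemma cocycle_apply_inv_smul (hf : ∀ g h x, f (g * h) x = f g (h • x) + f h x) (g : G) (x : α) :
    f g (g⁻¹ • x) = -f g⁻¹ x := by
  refine eq_neg_of_add_eq_zero_left ?_
  rw [← hf, mul_inv_cancel, cocycle_one hf]

end Cocycle

section ChangeOfVariables

variable {α : Type*} [MeasurableSpace α] {ν : Measure α} [IsFiniteMeasure ν] {φ : α → α}
  {g : α → ℝ}

lemma integrable_mul_rnDeriv_map_iff (hφ : Measurable φ) (hφν : ν.map φ ≪ ν)
    (hg : AEStronglyMeasurable g ν) :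
    Integrable (fun x => g x * ((ν.map φ).rnDeriv ν x).toReal) ν ↔ Integrable (g ∘ φ) ν := by
  rw [← integrable_map_measure (hg.mono_ac hφν) hφ.aemeasurable,
    ← integrable_toReal_rnDeriv_mul_iff hφν]
  simp_rw [mul_comm]

lemma integral_mul_rnDeriv_map (hφ : Measurable φ) (hφν : ν.map φ ≪ ν)
    (hg : AEStronglyMeasurable g ν) :
    ∫ x, g x * ((ν.map φ).rnDeriv ν x).toReal ∂ν = ∫ x, g (φ x) ∂ν := by
  rw [← integral_map hφ.aemeasurable (hg.mono_ac hφν), ← integral_rnDeriv_smul hφν]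
  simp_rw [smul_eq_mul, mul_comm]

end ChangeOfVariables

lemma tsum_mul_eq_tsum_mul_average_inv {G : Type*} [InvolutiveInv G] {μ a : G → ℝ}
    (hμ : ∀ g, μ g⁻¹ = μ g) (ha : Summable fun g => μ g * a g) :
    ∑' g, μ g * a g = ∑' g, μ g * ((a g + a g⁻¹) / 2) := by
  have hinv : (fun g => μ g * a g⁻¹) = (fun g => μ g * a g) ∘ Equiv.inv G := by
    ext g; simp [hμ]
  have ha_inv : Summable fun g => μ g * a g⁻¹ := by
    rwa [hinv, (Equiv.inv G).summable_iff]
  calc ∑' g, μ g * a g = ((∑' g, μ g * a g) + ∑' g, μ g * a g⁻¹) / 2 := by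
        rw [hinv, Function.comp_def, (Equiv.inv G).tsum_eq (fun g => μ g * a g)]; ring
    _ = ∑' g, μ g * ((a g + a g⁻¹) / 2) := by
        rw [← ha.tsum_add ha_inv, ← tsum_div_const]
        congr 1; ext g; ring

lemma summable_mul_integral_of_summable_mul_integral_abs {ι α : Type*} [MeasurableSpace α]
    {ν : Measure α} {μ : ι → ℝ} {f : ι → α → ℝ}
    (h : Summable fun i => μ i * ∫ x, |f i x| ∂ν) :
    Summable fun i => μ i * ∫ x, f i x ∂ν := by
  refine h.abs.of_norm_bounded fun i => ?_
  rw [Real.norm_eq_abs, abs_mul, abs_mul, abs_of_nonneg (integral_nonneg fun x => abs_nonneg _)]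
  exact mul_le_mul_of_nonneg_left abs_integral_le_integral_abs (abs_nonneg _)

section QuasiInvariant

variable {Γ B : Type*} [Group Γ] [MeasurableSpace B] [MulAction Γ B] {ν : Measure B}
  [IsFiniteMeasure ν] {f : Γ → B → ℝ}

lemma integral_cocycle_mul_one_sub_rnDeriv_div_two
    (hmeas : ∀ γ : Γ, Measurable fun ξ : B => γ • ξ)
    (hqi : ∀ γ : Γ, ν.map (fun ξ => γ⁻¹ • ξ) ≪ ν)
    (hcocycle : ∀ (γ γ' : Γ) (ξ : B), f (γ * γ') ξ = f γ (γ' • ξ) + f γ' ξ)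
    (hintf : ∀ γ : Γ, Integrable (f γ) ν) (γ : Γ) :
    ∫ ξ, f γ ξ * (1 - ((ν.map (fun ξ => γ⁻¹ • ξ)).rnDeriv ν ξ).toReal) / 2 ∂ν =
      (∫ ξ, f γ ξ ∂ν + ∫ ξ, f γ⁻¹ ξ ∂ν) / 2 := by
  have hcomp : f γ ∘ (fun ξ => γ⁻¹ • ξ) = fun ξ => -f γ⁻¹ ξ :=
    funext (cocycle_apply_inv_smul hcocycle γ)
  have hint : Integrable (fun ξ => f γ ξ * ((ν.map (fun ξ => γ⁻¹ • ξ)).rnDeriv ν ξ).toReal) ν := by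
    rw [integrable_mul_rnDeriv_map_iff (hmeas γ⁻¹) (hqi γ) (hintf γ).1, hcomp]
    exact (hintf γ⁻¹).neg
  simp_rw [mul_one_sub, sub_div]
  rw [integral_sub ((hintf γ).div_const 2) (hint.div_const 2), integral_div, integral_div,
    integral_mul_rnDeriv_map (hmeas γ⁻¹) (hqi γ) (hintf γ).1]
  simp_rw [cocycle_apply_inv_smul hcocycle γ]
  rw [integral_neg]
  ring

end QuasiInvariant

theorem symmetrization_lemma_general
    {Γ : Type*} [Group Γ]
    (μ : Γ → ℝ)
    (hsymm : ∀ g : Γ, μ g⁻¹ = μ g)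
    {B : Type*} [MeasurableSpace B] [MulAction Γ B]
    (hmeas : ∀ γ : Γ, Measurable fun ξ : B => γ • ξ)
    (ν : Measure B) [IsProbabilityMeasure ν]
    (hqi : ∀ γ : Γ, ν.map (fun ξ => γ⁻¹ • ξ) ≪ ν)
    (c : Γ → B → ℝ)
    (hc : ∀ γ : Γ, c γ = fun ξ => ((ν.map (fun ξ => γ⁻¹ • ξ)).rnDeriv ν ξ).toReal)
    (f : Γ → B → ℝ)
    (hcocycle : ∀ (γ γ' : Γ) (ξ : B), f (γ * γ') ξ = f γ (γ' • ξ) + f γ' ξ)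
    (hintf : ∀ γ : Γ, Integrable (f γ) ν)
    (hint : Summable fun γ : Γ => μ γ * ∫ ξ, |f γ ξ| ∂ν) :
    ∑' γ : Γ, μ γ * ∫ ξ, f γ ξ ∂ν =
      ∑' γ : Γ, μ γ * ∫ ξ, f γ ξ * (1 - c γ ξ) / 2 ∂ν := by
  rw [tsum_mul_eq_tsum_mul_average_inv hsymm
    (summable_mul_integral_of_summable_mul_integral_abs hint)]
  congr 1
  ext γ
  rw [hc, integral_cocycle_mul_one_sub_rnDeriv_div_two hmeas hqi hcocycle hintf]

/-- **symmetrization lemma.** For a symmetric probability measure `μ` on a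
countable group acting measurably on a probability space `(B, ν)` with quasi-invariant
measure `ν`, and an integrable additive cocycle `f`, one has
`∑_γ μ(γ) ∫ f(γ,ξ) dν(ξ) = ∑_γ μ(γ) ∫ f(γ,ξ) (1 - c(γ,ξ))/2 dν(ξ)`. -/
theorem symmetrization_lemma
    {Γ : Type*} [Group Γ] [Countable Γ]
    (μ : Γ → ℝ) (hpos : ∀ g, 0 ≤ μ g) (hprob : HasSum μ 1)
    (hsymm : ∀ g : Γ, μ g⁻¹ = μ g)
    {B : Type*} [MeasurableSpace B] [MulAction Γ B]
    (hmeas : ∀ γ : Γ, Measurable fun ξ : B => γ • ξ)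
    (ν : Measure B) [IsProbabilityMeasure ν]
    (hqi : ∀ γ : Γ, ν.map (fun ξ => γ⁻¹ • ξ) ≪ ν)
    (c : Γ → B → ℝ)
    (hc : ∀ γ : Γ, c γ = fun ξ => ((ν.map (fun ξ => γ⁻¹ • ξ)).rnDeriv ν ξ).toReal)
    (f : Γ → B → ℝ)
    (hfmeas : ∀ γ : Γ, Measurable (f γ))
    (hcocycle : ∀ (γ γ' : Γ) (ξ : B), f (γ * γ') ξ = f γ (γ' • ξ) + f γ' ξ)
    (hintf : ∀ γ : Γ, Integrable (f γ) ν)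
    (hint : Summable fun γ : Γ => μ γ * ∫ ξ, |f γ ξ| ∂ν) :
    ∑' γ : Γ, μ γ * ∫ ξ, f γ ξ ∂ν =
      ∑' γ : Γ, μ γ * ∫ ξ, f γ ξ * (1 - c γ ξ) / 2 ∂ν :=
  symmetrization_lemma_general μ hsymm hmeas ν hqi c hc f hcocycle hintf hint
end

section
/- The function H(x) = √(2x−x²)·log((1+√(2x−x²))/(1−√(2x−x²))) is monotone increasing and convex on the interval [0,1). -/
/-!
Write `u = √(2x - x²)`, so that `1 - u² = (1 - x)²` and `u' = (1 - x) / u` on `(0, 1)`, and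
`L v = log ((1 + v) / (1 - v))`, so that `L' v = 2 / (1 - v²)`. Then `H = u · L u` has
`H' = (1 - x) L(u) / u + 2 / (1 - x) ≥ 0` and `H'' = (2u / (1 - u²) - L u) / u³`. The latter is
nonnegative because `L v = 2 ∑ v^(2k+1) / (2k+1)` is dominated termwise by the geometric series
`2 ∑ v^(2k+1) = 2v / (1 - v²)`.
-/

open Real Set

noncomputable def logRatio (v : ℝ) : ℝ := log (1 + v) - log (1 - v)

lemma logRatio_nonneg {v : ℝ} (h0 : 0 ≤ v) (h1 : v < 1) : 0 ≤ logRatio v :=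
  sub_nonneg.2 <| log_le_log (by linarith) (by linarith)

lemma logRatio_le {v : ℝ} (h0 : 0 ≤ v) (h1 : v < 1) : logRatio v ≤ 2 * v / (1 - v ^ 2) := by
  have hv2 : v ^ 2 < 1 := by nlinarith
  have hgeom : HasSum (fun k : ℕ => 2 * v * (v ^ 2) ^ k) (2 * v * (1 - v ^ 2)⁻¹) :=
    (hasSum_geometric_of_lt_one (sq_nonneg v) hv2).mul_left (2 * v)
  rw [div_eq_mul_inv]
  refine hasSum_le (fun k => ?_)
    (hasSum_log_sub_log_of_abs_lt_one (by rwa [abs_of_nonneg h0])) hgeom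
  have hcoeff : 1 / (2 * (k : ℝ) + 1) ≤ 1 :=
    div_le_one_of_le₀ (by linarith [k.cast_nonneg (α := ℝ)]) (by positivity)
  have hpow : 0 ≤ (v ^ 2) ^ k * v := by positivity
  rw [pow_succ, pow_mul]
  nlinarith

lemma hasDerivAt_logRatio {v : ℝ} (h0 : -1 < v) (h1 : v < 1) :
    HasDerivAt logRatio (2 / (1 - v ^ 2)) v := by
  have hp := ((hasDerivAt_id v).const_add 1).log (by simp; linarith)
  have hm := ((hasDerivAt_id v).const_sub 1).log (by simp; linarith)
  refine (hp.sub hm).congr_deriv ?_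
  have : 1 + v ≠ 0 := by linarith
  have : 1 - v ≠ 0 := by linarith
  rw [id, show (1 : ℝ) - v ^ 2 = (1 + v) * (1 - v) by ring]
  field_simp
  ring

noncomputable def Ginv (x : ℝ) : ℝ := √(2 * x - x ^ 2)

lemma Ginv_nonneg (x : ℝ) : 0 ≤ Ginv x := sqrt_nonneg _

lemma Ginv_pos {x : ℝ} (h0 : 0 < x) (h2 : x < 2) : 0 < Ginv x :=
  sqrt_pos.2 (by nlinarith)

lemma Ginv_lt_one {x : ℝ} (hx : x ≠ 1) : Ginv x < 1 := by
  have : 0 < (1 - x) ^ 2 := sq_pos_of_ne_zero (sub_ne_zero.2 hx.symm)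
  rw [Ginv, sqrt_lt' one_pos]
  nlinarith

lemma one_sub_Ginv_sq {x : ℝ} (h0 : 0 ≤ x) (h2 : x ≤ 2) : 1 - Ginv x ^ 2 = (1 - x) ^ 2 := by
  rw [Ginv, sq_sqrt (by nlinarith)]
  ring

lemma hasDerivAt_Ginv {x : ℝ} (h0 : 0 < x) (h2 : x < 2) :
    HasDerivAt Ginv ((1 - x) / Ginv x) x := by
  have hpoly : HasDerivAt (fun y : ℝ => 2 * y - y ^ 2) (2 - 2 * x) x :=
    (((hasDerivAt_id x).const_mul 2).sub (hasDerivAt_pow 2 x)).congr_deriv (by norm_num)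
  refine ((hasDerivAt_sqrt (by nlinarith)).comp x hpoly).congr_deriv ?_
  have := (Ginv_pos h0 h2).ne'
  rw [← Ginv]
  field_simp

lemma hasDerivAt_logRatio_Ginv {x : ℝ} (h0 : 0 < x) (h1 : x < 1) :
    HasDerivAt (fun y => logRatio (Ginv y)) (2 / ((1 - x) * Ginv x)) x := by
  have hu := Ginv_lt_one h1.ne
  refine ((hasDerivAt_logRatio (by linarith [Ginv_nonneg x]) hu).comp x
    (hasDerivAt_Ginv h0 (by linarith))).congr_deriv ?_
  rw [one_sub_Ginv_sq h0.le (by linarith)]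
  have := (Ginv_pos h0 (by linarith)).ne'
  have : 1 - x ≠ 0 := by linarith
  field_simp

noncomputable def FGinv (x : ℝ) : ℝ := Ginv x * logRatio (Ginv x)

noncomputable def FGinvDeriv (x : ℝ) : ℝ := (1 - x) * logRatio (Ginv x) / Ginv x + 2 / (1 - x)

noncomputable def FGinvDeriv2 (x : ℝ) : ℝ :=
  (2 * Ginv x / (1 - Ginv x ^ 2) - logRatio (Ginv x)) / Ginv x ^ 3

lemma hasDerivAt_FGinv {x : ℝ} (h0 : 0 < x) (h1 : x < 1) :
    HasDerivAt FGinv (FGinvDeriv x) x := by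
  refine ((hasDerivAt_Ginv h0 (by linarith)).mul (hasDerivAt_logRatio_Ginv h0 h1)).congr_deriv ?_
  have := (Ginv_pos h0 (by linarith)).ne'
  have : 1 - x ≠ 0 := by linarith
  rw [FGinvDeriv]
  field_simp

lemma hasDerivAt_FGinvDeriv {x : ℝ} (h0 : 0 < x) (h1 : x < 1) :
    HasDerivAt FGinvDeriv (FGinvDeriv2 x) x := by
  have hu := (Ginv_pos h0 (by linarith)).ne'
  have hx : 1 - x ≠ 0 := by linarith
  have hlin : HasDerivAt (fun y : ℝ => 1 - y) (-1) x := by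
    simpa using (hasDerivAt_id x).const_sub 1
  have hfirst := (hlin.mul (hasDerivAt_logRatio_Ginv h0 h1)).div
    (hasDerivAt_Ginv h0 (by linarith)) hu
  have hsecond := (hasDerivAt_const x (2 : ℝ)).div hlin hx
  refine (hfirst.add hsecond).congr_deriv ?_
  have hsq := one_sub_Ginv_sq h0.le (by linarith : x ≤ 2)
  rw [FGinvDeriv2, hsq, Pi.mul_apply]
  field_simp
  linear_combination (-2 * Ginv x + logRatio (Ginv x) * (1 - x) ^ 2) * hsq

lemma FGinvDeriv_nonneg {x : ℝ} (h1 : x < 1) : 0 ≤ FGinvDeriv x := by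
  have := logRatio_nonneg (Ginv_nonneg x) (Ginv_lt_one h1.ne)
  have := Ginv_nonneg x
  have : 0 ≤ 1 - x := by linarith
  rw [FGinvDeriv]
  positivity

lemma FGinvDeriv2_nonneg {x : ℝ} (h1 : x < 1) : 0 ≤ FGinvDeriv2 x :=
  div_nonneg (sub_nonneg.2 (logRatio_le (Ginv_nonneg x) (Ginv_lt_one h1.ne)))
    (pow_nonneg (Ginv_nonneg x) 3)

lemma continuousOn_FGinv : ContinuousOn FGinv {x | x ≠ 1} := by
  have hG : Continuous Ginv := by unfold Ginv; fun_prop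
  refine hG.continuousOn.mul (ContinuousOn.sub ?_ ?_) <;>
    refine ContinuousOn.log (by fun_prop) fun x hx => ?_
  · linarith [Ginv_nonneg x]
  · linarith [Ginv_lt_one hx]

lemma eqOn_FGinv :
    EqOn
      (fun x : ℝ => √(2 * x - x ^ 2) * log ((1 + √(2 * x - x ^ 2)) / (1 - √(2 * x - x ^ 2))))
      FGinv {x | x ≠ 1} := fun x hx => by
  change Ginv x * log ((1 + Ginv x) / (1 - Ginv x)) = _
  rw [log_div (by linarith [Ginv_nonneg x]) (by linarith [Ginv_lt_one hx])]
  rfl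

lemma monotoneOn_FGinv : MonotoneOn FGinv (Ico 0 1) := by
  refine monotoneOn_of_hasDerivWithinAt_nonneg (f' := FGinvDeriv) (convex_Ico 0 1)
    (continuousOn_FGinv.mono fun x hx => hx.2.ne) (fun x hx => ?_) fun x hx => ?_ <;>
    simp only [interior_Ico] at hx ⊢
  · exact (hasDerivAt_FGinv hx.1 hx.2).hasDerivWithinAt
  · exact FGinvDeriv_nonneg hx.2

lemma convexOn_FGinv : ConvexOn ℝ (Ico 0 1) FGinv := by
  refine convexOn_of_hasDerivWithinAt2_nonneg (f' := FGinvDeriv) (f'' := FGinvDeriv2)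
    (convex_Ico 0 1) (continuousOn_FGinv.mono fun x hx => hx.2.ne) (fun x hx => ?_) (fun x hx => ?_)
    fun x hx => ?_ <;> simp only [interior_Ico] at hx ⊢
  · exact (hasDerivAt_FGinv hx.1 hx.2).hasDerivWithinAt
  · exact (hasDerivAt_FGinvDeriv hx.1 hx.2).hasDerivWithinAt
  · exact FGinvDeriv2_nonneg hx.2

/-- The function
`H(x) = √(2x-x²) log((1+√(2x-x²))/(1-√(2x-x²)))` (which is `F ∘ G⁻¹` for
`F(x) = 2x artanh x` and `G(x) = 1-√(1-x²)`) is monotone increasing and convex on `[0,1)`. -/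
theorem FGinv_monotoneOn_convexOn :
    MonotoneOn
      (fun x : ℝ => Real.sqrt (2 * x - x ^ 2) *
        Real.log ((1 + Real.sqrt (2 * x - x ^ 2)) / (1 - Real.sqrt (2 * x - x ^ 2))))
      (Set.Ico (0 : ℝ) 1) ∧
    ConvexOn ℝ (Set.Ico (0 : ℝ) 1)
      (fun x : ℝ => Real.sqrt (2 * x - x ^ 2) *
        Real.log ((1 + Real.sqrt (2 * x - x ^ 2)) / (1 - Real.sqrt (2 * x - x ^ 2)))) := by
  have heq := (eqOn_FGinv.mono fun x (hx : x ∈ Ico (0 : ℝ) 1) => hx.2.ne).symm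
  exact ⟨monotoneOn_FGinv.congr heq, convexOn_FGinv.congr heq⟩
end

section
/- Let n ≥ 1 and 0 ≤ k ≤ n be integers, and let A(x) = (1+x)·log(1+x) + (1−x)·log(1−x). Then Σ_{m=0}^{n} [2m−n ≥ k]·C(n,m) ≤ 2^n·exp(−(n/2)·A(k/n)), where C(n,m) is the binomial coefficient and the bracket selects those m with 2m−n ≥ k. Equivalently, the simple random walk S_n on ℤ (sum of n independent uniform ±1 steps) satisfies P(S_n ≥ k) ≤ exp(−(n/2)·A(k/n)). -/
/-!
Chernoff's method: for `t ≥ 0` and `S = 2m - n`, `[k ≤ S] ≤ exp (t (S - k))`, and the binomial theorem gives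
`∑ₘ C(n,m) exp (t (2m - n)) = (2 cosh t)ⁿ`. The choice `t = artanh (k/n)` turns
`exp (-t k) (2 cosh t)ⁿ` into `2ⁿ exp (-(n/2) A(k/n))`. At `k = n` that choice is unavailable,
but then only `m = n` contributes and both sides equal `1`.
-/

open Real Finset

theorem sum_choose_mul_exp_two_mul_sub (n : ℕ) (t : ℝ) :
    ∑ m ∈ range (n + 1), (n.choose m : ℝ) * exp (t * (2 * m - n)) = (2 * cosh t) ^ n := by
  rw [cosh_eq, mul_div_cancel₀ _ two_ne_zero, add_pow]
  refine sum_congr rfl fun m hm => ?_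
  have hmn : m ≤ n := Nat.lt_succ_iff.mp (mem_range.mp hm)
  rw [← exp_nat_mul, ← exp_nat_mul, ← exp_add, Nat.cast_sub hmn, mul_comm]
  ring_nf

theorem sum_choose_ite_le_exp_mul_two_mul_cosh_pow (n : ℕ) (a : ℤ) {t : ℝ} (ht : 0 ≤ t) :
    (∑ m ∈ range (n + 1), if a ≤ 2 * (m : ℤ) - n then (n.choose m : ℝ) else 0) ≤
      exp (-(t * a)) * (2 * cosh t) ^ n := by
  calc (∑ m ∈ range (n + 1), if a ≤ 2 * (m : ℤ) - n then (n.choose m : ℝ) else 0)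
      ≤ ∑ m ∈ range (n + 1), (n.choose m : ℝ) * exp (t * (2 * m - n - a)) := by
        refine sum_le_sum fun m _ => ?_
        split_ifs with h
        · have h' : (a : ℝ) ≤ 2 * m - n := by exact_mod_cast h
          exact le_mul_of_one_le_right (by positivity)
            (one_le_exp (mul_nonneg ht (by linarith)))
        · positivity
    _ = exp (-(t * a)) * ∑ m ∈ range (n + 1), (n.choose m : ℝ) * exp (t * (2 * m - n)) := by
        rw [mul_sum]
        refine sum_congr rfl fun m _ => ?_
        rw [mul_left_comm, ← exp_add]
        ring_nf
    _ = exp (-(t * a)) * (2 * cosh t) ^ n := by rw [sum_choose_mul_exp_two_mul_sub]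

theorem exp_neg_artanh_mul_mul_two_mul_cosh_artanh_pow {x : ℝ} (hx : x ∈ Set.Ioo (-1) 1)
    (n : ℕ) :
    exp (-(artanh x * (n * x))) * (2 * cosh (artanh x)) ^ n =
      2 ^ n * exp (-((n : ℝ) / 2) * ((1 + x) * log (1 + x) + (1 - x) * log (1 - x))) := by
  have hplus : 0 < 1 + x := by linarith [hx.1]
  have hminus : 0 < 1 - x := by linarith [hx.2]
  have hartanh : artanh x = (log (1 + x) - log (1 - x)) / 2 := by
    rw [artanh_eq_half_log (Set.Ioo_subset_Icc_self hx), log_div hplus.ne' hminus.ne']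
    ring
  have hcosh : cosh (artanh x) = exp (-(log (1 + x) + log (1 - x)) / 2) := by
    have hsq : 1 - x ^ 2 = (1 + x) * (1 - x) := by ring
    rw [cosh_artanh hx, sqrt_eq_rpow, rpow_def_of_pos (by nlinarith), hsq,
      log_mul hplus.ne' hminus.ne', neg_div, exp_neg, one_div]
    ring_nf
  rw [hcosh, mul_pow, ← exp_nat_mul, mul_left_comm, ← exp_add, hartanh]
  ring_nf

theorem sum_choose_ite_self_le_two_mul_sub (n : ℕ) :
    (∑ m ∈ range (n + 1), if (n : ℤ) ≤ 2 * (m : ℤ) - n then (n.choose m : ℝ) else 0) = 1 := by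
  rw [sum_eq_single_of_mem n (self_mem_range_succ n) fun m hm hmn => ?_]
  · rw [if_pos (by omega), Nat.choose_self, Nat.cast_one]
  · have : ¬ (n : ℤ) ≤ 2 * (m : ℤ) - n := by
      have := mem_range.mp hm
      omega
    simp [this]

/-- **Chernov bound.** For `1 ≤ n` and `k ≤ n`,
`P(Sₙ ≥ k) ≤ exp(-(n/2) A(k/n))` for the simple random walk on `ℤ`, where
`A(x) = (1+x) log (1+x) + (1-x) log (1-x)`. -/
theorem simple_random_walk_chernov_bound (n k : ℕ) (hn : 1 ≤ n) (hk : k ≤ n) :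
    (∑ m ∈ Finset.range (n + 1),
        if (k : ℤ) ≤ 2 * (m : ℤ) - (n : ℤ) then ((n.choose m : ℕ) : ℝ) else 0) ≤
      2 ^ n * Real.exp (-((n : ℝ) / 2) *
        ((1 + (k : ℝ) / n) * Real.log (1 + (k : ℝ) / n) +
          (1 - (k : ℝ) / n) * Real.log (1 - (k : ℝ) / n))) := by
  have hn0 : (0 : ℝ) < n := by exact_mod_cast hn
  rcases hk.eq_or_lt with rfl | hkn
  · rw [sum_choose_ite_self_le_two_mul_sub, div_self hn0.ne', sub_self, log_zero]
    have hexponent : -((k : ℝ) / 2) * ((1 + 1) * log (1 + 1) + 0 * 0) = -(k * log 2) := by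
      ring_nf
    rw [hexponent, exp_neg, exp_nat_mul, exp_log two_pos, mul_inv_cancel₀ (by positivity)]
  · have hx : (k : ℝ) / n ∈ Set.Ioo (-1) 1 :=
      ⟨by linarith [div_nonneg k.cast_nonneg hn0.le], (div_lt_one hn0).2 (by exact_mod_cast hkn)⟩
    have hk' : (k : ℝ) = n * (k / n) := by field_simp
    calc _ ≤ exp (-(artanh (k / n) * k)) * (2 * cosh (artanh (k / n))) ^ n := by
          simpa only [Int.cast_natCast] using sum_choose_ite_le_exp_mul_two_mul_cosh_pow n k
            (artanh_nonneg (div_nonneg k.cast_nonneg hn0.le))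
      _ = _ := by rw [← exp_neg_artanh_mul_mul_two_mul_cosh_artanh_pow hx n, ← hk']
end

section
/- For every x ∈ [0,1], the supremum over t > 0 of t·x − log(cosh t) equals A(x)/2, where A(x) = (1+x)·log(1+x) + (1−x)·log(1−x) (with the convention (1−x)·log(1−x) = 0 at x = 1). -/
/-!
The upper bound is Gibbs' inequality between the two-point distributions
`((1 + x)/2, (1 - x)/2)` and `(eᵗ, e⁻ᵗ) / (2 cosh t)`. For `x < 1` equality holds at
`t = artanh x ≥ 0`, which is a limit of points of `(0, ∞)`; for `x = 1` the bound `log 2` is the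
limit of `t - log cosh t` as `t → ∞`.
-/

open Real Set Filter Topology

theorem csSup_image_eq_of_tendsto {α β : Type*} [ConditionallyCompleteLinearOrder β]
    [TopologicalSpace β] [OrderTopology β] {f : α → β} {s : Set α} {l : Filter α} [l.NeBot]
    {a : β} (hle : ∀ t ∈ s, f t ≤ a) (hs : s ∈ l) (hf : Tendsto f l (𝓝 a)) :
    sSup (f '' s) = a :=
  (isLUB_of_mem_closure (forall_mem_image.2 hle)
    (mem_closure_of_tendsto hf (mem_of_superset hs fun _ => mem_image_of_mem f))).csSup_eq
    ((Filter.nonempty_of_mem hs).image f)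

theorem Real.sub_le_mul_log_sub_mul_log {a b : ℝ} (ha : 0 ≤ a) (hb : 0 < b) :
    a - b ≤ a * log a - a * log b := by
  rcases ha.eq_or_lt with rfl | ha
  · simpa using hb.le
  have h := one_sub_inv_le_log_of_pos (div_pos ha hb)
  rw [inv_div, log_div ha.ne' hb.ne'] at h
  have := mul_le_mul_of_nonneg_left h ha.le
  rw [mul_sub, mul_one, mul_div_cancel₀ _ ha.ne'] at this
  linarith

theorem Real.mul_sub_log_cosh_le {x : ℝ} (hx : x ∈ Icc (-1) 1) (t : ℝ) :
    t * x - log (cosh t) ≤ ((1 + x) * log (1 + x) + (1 - x) * log (1 - x)) / 2 := by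
  have hc := cosh_pos t
  have hp := sub_le_mul_log_sub_mul_log (by linarith [hx.1] : 0 ≤ 1 + x)
    (div_pos (exp_pos t) hc)
  have hm := sub_le_mul_log_sub_mul_log (by linarith [hx.2] : 0 ≤ 1 - x)
    (div_pos (exp_pos (-t)) hc)
  have hsum : exp t / cosh t + exp (-t) / cosh t = 2 := by
    rw [← add_div, cosh_eq]; field_simp
  rw [log_div (exp_pos _).ne' hc.ne', log_exp] at hp
  rw [log_div (exp_pos _).ne' hc.ne', log_exp] at hm
  linarith

theorem Real.artanh_mul_sub_log_cosh_artanh {x : ℝ} (hx : x ∈ Ioo (-1) 1) :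
    artanh x * x - log (cosh (artanh x)) =
      ((1 + x) * log (1 + x) + (1 - x) * log (1 - x)) / 2 := by
  have hp : 0 < 1 + x := by linarith [hx.1]
  have hm : 0 < 1 - x := by linarith [hx.2]
  rw [cosh_artanh hx, artanh_eq_half_log (Ioo_subset_Icc_self hx), log_div hp.ne' hm.ne',
    one_div √_, log_inv, log_sqrt (by nlinarith), show 1 - x ^ 2 = (1 + x) * (1 - x) by ring,
    log_mul hp.ne' hm.ne']
  ring

theorem Real.tendsto_sub_log_cosh_atTop :
    Tendsto (fun t => t - log (cosh t)) atTop (𝓝 (log 2)) := by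
  have key (t : ℝ) : t - log (cosh t) = -log ((1 + exp (-(2 * t))) / 2) := by
    have : cosh t = exp t * ((1 + exp (-(2 * t))) / 2) := by
      rw [cosh_eq, mul_div_assoc', mul_add, ← exp_add]; ring_nf
    rw [this, log_mul (exp_pos t).ne' (by positivity), log_exp]; ring
  simp_rw [key]
  have hexp : Tendsto (fun t : ℝ => exp (-(2 * t))) atTop (𝓝 0) :=
    tendsto_exp_atBot.comp (tendsto_neg_atTop_atBot.comp (tendsto_id.const_mul_atTop two_pos))
  have := (((hexp.const_add 1).div_const 2).log (by norm_num)).neg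
  simpa [log_inv] using this

/-- For `x ∈ [0,1]`,
`sup_{t>0} (t x - log cosh t) = A(x)/2`, where
`A(x) = (1+x) log (1+x) + (1-x) log (1-x)` (with `(1-x) log (1-x) = 0` at `x = 1`,
which is Lean's convention since `Real.log 0 = 0`). -/
theorem sSup_linear_sub_log_cosh (x : ℝ) (hx : x ∈ Set.Icc (0 : ℝ) 1) :
    sSup ((fun t : ℝ => t * x - Real.log (Real.cosh t)) '' Set.Ioi (0 : ℝ)) =
      ((1 + x) * Real.log (1 + x) + (1 - x) * Real.log (1 - x)) / 2 := by
  obtain ⟨hx0, hx1⟩ := hx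
  have hle : ∀ t ∈ Ioi (0 : ℝ), t * x - log (cosh t) ≤ _ :=
    fun t _ => mul_sub_log_cosh_le ⟨by linarith, hx1⟩ t
  rcases hx1.lt_or_eq with hx1 | rfl
  · have : (𝓝[Ioi 0] (artanh x)).NeBot := by
      rw [← mem_closure_iff_nhdsWithin_neBot, closure_Ioi]
      exact artanh_nonneg hx0
    refine csSup_image_eq_of_tendsto (l := 𝓝[Ioi 0] (artanh x)) hle self_mem_nhdsWithin ?_
    rw [← artanh_mul_sub_log_cosh_artanh ⟨by linarith, hx1⟩]
    exact ((continuous_id.mul continuous_const).sub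
      (continuous_cosh.log fun t => (cosh_pos t).ne')).continuousWithinAt
  · refine csSup_image_eq_of_tendsto hle (Ioi_mem_atTop 0) ?_
    convert tendsto_sub_log_cosh_atTop using 2 <;> norm_num
end

section
/- Let Γ be a countable group with a proper left-invariant distance and let μ be a symmetric probability measure on Γ whose support is contained in the closed ball {g : |g| ≤ 1}. Let P be the Markov operator on ℓ²(Γ), (Pf)(x) = Σ_g μ(g)·f(xg), with operator norm ‖P‖. Then for every integer n ≥ 1 and every g ∈ Γ with |g| ≤ n, μ^{*n}(g) ≤ 2·‖P‖^n·exp(−(n/2)·A(|g|/n)), where A(x) = (1+x)·log(1+x) + (1−x)·log(1−x). -/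
/-!
Realise `P` as a self-adjoint operator on `ℓ²(Γ)` with `μ^{*k}(g) = ⟪δ_g, Pᵏ δ_1⟫`. After
normalising to `‖P‖ ≤ 1`, expand `2ⁿ Xⁿ = ∑_{i+k=n} C(n,i) T_{k-i}` in Chebyshev polynomials.
The Pell identity `T_m² + (1 - X²) U_{m-1}² = 1` gives `‖T_m(P)‖ ≤ 1`, while finite propagation
(`⟪δ_g, Pᵏ δ_1⟫ = 0` for `k < |g|`, since `μ` lives on the unit ball) kills every term with
`|k - i| < |g|`. Hence `μ^{*n}(g) ≤ ‖P‖ⁿ · ℙ(|Sₙ| ≥ |g|)` for the simple random walk `Sₙ` on `ℤ`,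
and the Chernoff bound at the parameter `artanh (|g| / n)` turns this tail into the exponential.
-/

open Polynomial Polynomial.Chebyshev Finset Real
open scoped RealInnerProductSpace lp

namespace Polynomial.Chebyshev
variable (R : Type*) [CommRing R]

theorem T_sq_add_one_sub_X_sq_mul_U_sq (m : ℤ) :
    T R m ^ 2 + (1 - X ^ 2) * U R (m - 1) ^ 2 = 1 := by
  have step (k : ℤ) : T R (k + 1) ^ 2 + (1 - X ^ 2) * U R k ^ 2 =
      T R k ^ 2 + (1 - X ^ 2) * U R (k - 1) ^ 2 := by
    have hT := T_eq_X_mul_T_sub_pol_U R (k - 1)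
    have hU := U_eq_X_mul_U_add_T R (k - 1)
    rw [sub_add_cancel] at hU
    rw [show k - 1 + 2 = k + 1 by ring, sub_add_cancel] at hT
    rw [hT, hU]
    ring
  induction m using Int.induction_on with
  | zero => simp
  | succ k ih => rw [add_sub_cancel_right, step, ih]
  | pred k ih => rw [← step (-k - 1), sub_add_cancel, ih]

theorem two_pow_mul_X_pow_eq_sum_choose_mul_T (n : ℕ) :
    (2 : R[X]) ^ n * X ^ n =
      ∑ ij ∈ antidiagonal n, (n.choose ij.1 : R[X]) * T R ((ij.2 : ℤ) - ij.1) := by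
  induction n with
  | zero => simp
  | succ n ih =>
    rw [sum_antidiagonal_choose_succ_mul (fun i k => T R ((k : ℤ) - i)), pow_succ, pow_succ,
      mul_mul_mul_comm, ih, sum_mul, ← sum_add_distrib]
    refine sum_congr rfl fun ij hij => ?_
    rw [← Nat.choose_symm_of_eq_add (mem_antidiagonal.mp hij).symm]
    push_cast
    rw [add_sub_right_comm, ← sub_sub]
    linear_combination -(n.choose ij.1 : R[X]) * T_add_one R ((ij.2 : ℤ) - ij.1)

end Polynomial.Chebyshev

noncomputable def carneRate (x : ℝ) : ℝ :=
  (1 + x) * log (1 + x) + (1 - x) * log (1 - x)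

/-- `ℙ(|Sₙ| ≥ r)` for the simple random walk `Sₙ` on `ℤ`: a path with `i` down-steps and `k`
up-steps ends at `k - i`. -/
noncomputable def binomialTail (n : ℕ) (r : ℝ) : ℝ :=
  (∑ ij ∈ (antidiagonal n).filter (fun ij => r ≤ |(ij.2 : ℝ) - ij.1|), (n.choose ij.1 : ℝ)) /
    2 ^ n

theorem sum_choose_mul_exp_mul (n : ℕ) (t : ℝ) :
    ∑ ij ∈ antidiagonal n, (n.choose ij.1 : ℝ) * exp (t * (ij.2 - ij.1)) = (2 * cosh t) ^ n := by
  rw [cosh_eq, mul_div_cancel₀ _ two_ne_zero, add_comm, (Commute.all _ _).add_pow']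
  refine sum_congr rfl fun ij _ => ?_
  rw [nsmul_eq_mul, ← exp_nat_mul, ← exp_nat_mul, ← exp_add]
  ring_nf

theorem one_le_exp_mul_add_exp_neg_mul {t r m : ℝ} (ht : 0 ≤ t) (hr : r ≤ |m|) :
    1 ≤ exp (-(t * r)) * (exp (t * m) + exp (-t * m)) := by
  have hm : exp (t * |m|) ≤ exp (t * m) + exp (-t * m) := by
    rcases abs_cases m with ⟨h, _⟩ | ⟨h, _⟩ <;> rw [h]
    · linarith [exp_pos (-t * m)]
    · rw [mul_neg, ← neg_mul]; linarith [exp_pos (t * m)]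
  calc 1 ≤ exp (-(t * r)) * exp (t * |m|) := by
        rw [← exp_add, one_le_exp_iff]; nlinarith
    _ ≤ _ := by gcongr

theorem binomialTail_le_exp_mul_cosh_pow (n : ℕ) (r : ℝ) {t : ℝ} (ht : 0 ≤ t) :
    binomialTail n r ≤ 2 * exp (-(t * r)) * cosh t ^ n := by
  set w : ℕ × ℕ → ℝ := fun ij =>
    exp (-(t * r)) * (exp (t * (ij.2 - ij.1)) + exp (-t * (ij.2 - ij.1)))
  have hsum : ∑ ij ∈ (antidiagonal n).filter (fun ij => r ≤ |(ij.2 : ℝ) - ij.1|),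
      (n.choose ij.1 : ℝ) ≤ 2 * exp (-(t * r)) * (2 * cosh t) ^ n :=
    calc _ ≤ ∑ ij ∈ (antidiagonal n).filter (fun ij => r ≤ |(ij.2 : ℝ) - ij.1|),
          (n.choose ij.1 : ℝ) * w ij := by
          refine sum_le_sum fun ij hij => le_mul_of_one_le_right (by positivity) ?_
          exact one_le_exp_mul_add_exp_neg_mul ht (mem_filter.mp hij).2
      _ ≤ ∑ ij ∈ antidiagonal n, (n.choose ij.1 : ℝ) * w ij :=
          sum_le_sum_of_subset_of_nonneg (filter_subset _ _) fun _ _ _ => by positivity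
      _ = 2 * exp (-(t * r)) * (2 * cosh t) ^ n := by
          simp only [w, mul_add, mul_left_comm _ (exp (-(t * r))), sum_add_distrib, ← mul_sum,
            sum_choose_mul_exp_mul, cosh_neg]
          ring
  rw [binomialTail, div_le_iff₀ (by positivity)]
  exact hsum.trans_eq (by ring)

theorem exp_neg_artanh_mul_cosh_artanh_pow (n : ℕ) {x : ℝ} (hx : x ∈ Set.Ioo (-1) 1) :
    exp (-(artanh x * (n * x))) * cosh (artanh x) ^ n = exp (-(n / 2) * carneRate x) := by
  obtain ⟨hx1, hx2⟩ := hx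
  have hlog_cosh : log (cosh (artanh x)) = -(log (1 + x) + log (1 - x)) / 2 := by
    rw [cosh_artanh ⟨hx1, hx2⟩, one_div, log_inv, log_sqrt (by nlinarith),
      show 1 - x ^ 2 = (1 + x) * (1 - x) by ring, log_mul (by linarith) (by linarith)]
    ring
  rw [← exp_log (cosh_pos (artanh x)), ← exp_nat_mul, ← exp_add, hlog_cosh,
    artanh_eq_half_log ⟨hx1.le, hx2.le⟩, log_div (by linarith) (by linarith), carneRate]
  ring_nf

theorem binomialTail_self_le (n : ℕ) : binomialTail n n ≤ 2 / 2 ^ n := by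
  set S := (antidiagonal n).filter (fun ij => (n : ℝ) ≤ |(ij.2 : ℝ) - ij.1|)
  have hS : S ⊆ {(0, n), (n, 0)} := by
    intro ij hij
    obtain ⟨hsum, hfar⟩ := mem_filter.mp hij
    rw [HasAntidiagonal.mem_antidiagonal] at hsum
    have hsumR : (ij.1 : ℝ) + ij.2 = n := by exact_mod_cast hsum
    rcases le_abs'.mp hfar with h | h
    · have h2 : ij.2 = 0 := Nat.cast_nonpos.mp (by linarith : (ij.2 : ℝ) ≤ 0)
      simp [Prod.ext_iff, h2, ← hsum]
    · have h1 : ij.1 = 0 := Nat.cast_nonpos.mp (by linarith : (ij.1 : ℝ) ≤ 0)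
      simp [Prod.ext_iff, h1, ← hsum]
  have hchoose : ∀ ij ∈ S, (n.choose ij.1 : ℝ) ≤ 1 := fun ij hij => by
    rcases mem_insert.mp (hS hij) with rfl | h
    · simp
    · simp [mem_singleton.mp h]
  rw [binomialTail]
  gcongr
  calc ∑ ij ∈ S, (n.choose ij.1 : ℝ) ≤ #S • (1 : ℝ) := sum_le_card_nsmul _ _ _ hchoose
    _ ≤ 2 := by
        rw [nsmul_one]
        exact_mod_cast (card_le_card hS).trans card_le_two

theorem binomialTail_le_exp_carneRate (n : ℕ) {d : ℝ} (hd0 : 0 ≤ d) (hdn : d ≤ n) :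
    binomialTail n d ≤ 2 * exp (-(n / 2) * carneRate (d / n)) := by
  rcases (div_le_one_of_le₀ hdn n.cast_nonneg).lt_or_eq with hx | hx
  · have hd : d = n * (d / n) := by
      rcases eq_or_ne (n : ℝ) 0 with hn | hn
      · simp only [hn] at hdn ⊢; linarith
      · field_simp
    have hx0 : 0 ≤ d / n := by positivity
    -- `artanh (d / n)` is the optimal Chernoff parameter.
    calc _ ≤ 2 * exp (-(artanh (d / n) * d)) * cosh (artanh (d / n)) ^ n :=
          binomialTail_le_exp_mul_cosh_pow n d (artanh_nonneg hx0)
      _ = _ := by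
          rw [mul_assoc, ← exp_neg_artanh_mul_cosh_artanh_pow n ⟨by linarith, hx⟩, ← hd]
  · have hn : (n : ℝ) ≠ 0 := by rintro h; simp [h] at hx
    have hd : d = n := by field_simp at hx; exact hx
    have hrate : carneRate 1 = 2 * log 2 := by norm_num [carneRate]
    rw [hx, hd, hrate, show -((n : ℝ) / 2) * (2 * log 2) = n * -log 2 by ring, exp_nat_mul,
      exp_neg, exp_log two_pos, inv_pow, ← div_eq_mul_inv]
    exact binomialTail_self_le n

theorem IsSelfAdjoint.aeval {𝒜 : Type*} [Ring 𝒜] [StarRing 𝒜] [Algebra ℝ 𝒜] [StarModule ℝ 𝒜]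
    {a : 𝒜} (ha : IsSelfAdjoint a) (p : ℝ[X]) : IsSelfAdjoint (aeval a p) := by
  induction p using Polynomial.induction_on' with
  | add p q hp hq => rw [map_add]; exact hp.add hq
  | monomial k c =>
    rw [aeval_monomial, ← Algebra.smul_def]
    exact (IsSelfAdjoint.all c).smul (ha.pow k)

section CarneVaropoulos
variable {E : Type*} [NormedAddCommGroup E] [InnerProductSpace ℝ E]

theorem inner_aeval_apply_eq_zero {A : E →L[ℝ] E} {u v : E} {r : ℝ}
    (h : ∀ k : ℕ, (k : ℝ) < r → ⟪u, (A ^ k) v⟫ = 0) {p : ℝ[X]} (hp : (p.natDegree : ℝ) < r) :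
    ⟪u, aeval A p v⟫ = 0 := by
  rw [aeval_eq_sum_range, _root_.sum_apply, inner_sum]
  refine sum_eq_zero fun i hi => ?_
  have hi : (i : ℝ) ≤ p.natDegree := by exact_mod_cast Nat.lt_succ_iff.mp (mem_range.mp hi)
  rw [smul_apply, inner_smul_right, h i (by linarith), mul_zero]

variable [CompleteSpace E]

theorem norm_aeval_T_le_one {A : E →L[ℝ] E} (hA : IsSelfAdjoint A) (hA1 : ‖A‖ ≤ 1) (m : ℤ) :
    ‖aeval A (T ℝ m)‖ ≤ 1 := by
  set B := aeval A (T ℝ m)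
  set C := aeval A (U ℝ (m - 1))
  have hBC : B * B + C * (1 - A * A) * C = 1 := by
    have h : T ℝ m * T ℝ m + U ℝ (m - 1) * (1 - X * X) * U ℝ (m - 1) = 1 := by
      linear_combination T_sq_add_one_sub_X_sq_mul_U_sq ℝ m
    simpa only [map_add, map_mul, map_sub, map_one, aeval_X] using congrArg (aeval A) h
  refine ContinuousLinearMap.opNorm_le_bound B zero_le_one fun f => ?_
  -- The bracket is `⟪C f, (1 - A²) C f⟫ ≥ 0`, so the Pell identity bounds `‖B f‖` by `‖f‖`.
  have hpyth : ‖B f‖ ^ 2 + (‖C f‖ ^ 2 - ‖A (C f)‖ ^ 2) = ‖f‖ ^ 2 := by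
    have h := congrArg (fun S : E →L[ℝ] E => ⟪f, S f⟫) hBC
    have hsymm (S : E →L[ℝ] E) (hS : IsSelfAdjoint S) (x y : E) : ⟪x, S y⟫ = ⟪S x, y⟫ :=
      (hS.isSymmetric x y).symm
    simp only [add_apply, mul_apply_eq_comp, sub_apply, one_apply_eq_self, inner_add_right] at h
    rw [hsymm B (hA.aeval _), hsymm C (hA.aeval _), inner_sub_right, hsymm A hA (C f)] at h
    simpa only [real_inner_self_eq_norm_sq] using h
  have hAC : ‖A (C f)‖ ≤ ‖C f‖ := A.le_of_opNorm_le hA1 _ |>.trans_eq (one_mul _)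
  have hsq : ‖B f‖ ^ 2 ≤ (1 * ‖f‖) ^ 2 := by nlinarith [norm_nonneg (A (C f))]
  exact le_of_sq_le_sq hsq (by positivity)

theorem abs_inner_pow_apply_le_of_norm_le_one {A : E →L[ℝ] E} (hA : IsSelfAdjoint A)
    (hA1 : ‖A‖ ≤ 1) {u v : E} {r : ℝ} (h : ∀ k : ℕ, (k : ℝ) < r → ⟪u, (A ^ k) v⟫ = 0) (n : ℕ) :
    |⟪u, (A ^ n) v⟫| ≤ ‖u‖ * ‖v‖ * binomialTail n r := by
  set c : ℕ × ℕ → ℝ := fun ij => ⟪u, aeval A (T ℝ ((ij.2 : ℤ) - ij.1)) v⟫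
  have hexpand : (2 : ℝ) ^ n * ⟪u, (A ^ n) v⟫ =
      ∑ ij ∈ antidiagonal n, (n.choose ij.1 : ℝ) * c ij := by
    have hop : (2 : ℝ) ^ n • A ^ n =
        ∑ ij ∈ antidiagonal n, (n.choose ij.1 : ℝ) • aeval A (T ℝ ((ij.2 : ℤ) - ij.1)) := by
      simpa only [Algebra.smul_def, map_pow, map_ofNat, map_natCast, map_mul, aeval_X, map_sum]
        using congrArg (aeval A) (two_pow_mul_X_pow_eq_sum_choose_mul_T ℝ n)
    rw [← inner_smul_right, ← smul_apply, hop, _root_.sum_apply, inner_sum]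
    simp only [smul_apply, inner_smul_right, c]
  have hvanish (ij : ℕ × ℕ) : ¬ r ≤ |(ij.2 : ℝ) - ij.1| → c ij = 0 := fun hij =>
    inner_aeval_apply_eq_zero h <| by
      rw [natDegree_T, Nat.cast_natAbs]; push_cast; exact not_le.mp hij
  have hbound (ij : ℕ × ℕ) : |c ij| ≤ ‖u‖ * ‖v‖ :=
    (abs_real_inner_le_norm _ _).trans <| mul_le_mul_of_nonneg_left
      (((aeval A _).le_of_opNorm_le (norm_aeval_T_le_one hA hA1 _) v).trans_eq (one_mul _))
      (norm_nonneg u)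
  set S := (antidiagonal n).filter (fun ij => r ≤ |(ij.2 : ℝ) - ij.1|)
  rw [binomialTail, mul_div_assoc', le_div_iff₀ (by positivity)]
  calc |⟪u, (A ^ n) v⟫| * 2 ^ n = |∑ ij ∈ antidiagonal n, (n.choose ij.1 : ℝ) * c ij| := by
        rw [← hexpand, abs_mul, abs_of_pos (by positivity : (0 : ℝ) < 2 ^ n), mul_comm]
    _ = |∑ ij ∈ S, (n.choose ij.1 : ℝ) * c ij| := by
        refine congrArg _ (sum_filter_of_ne fun ij _ hij => ?_).symm
        by_contra hr
        exact hij (by rw [hvanish ij hr, mul_zero])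
    _ ≤ ∑ ij ∈ S, (n.choose ij.1 : ℝ) * (‖u‖ * ‖v‖) := by
        refine (abs_sum_le_sum_abs _ _).trans (sum_le_sum fun ij _ => ?_)
        rw [abs_mul, Nat.abs_cast]
        exact mul_le_mul_of_nonneg_left (hbound ij) (by positivity)
    _ = ‖u‖ * ‖v‖ * ∑ ij ∈ S, (n.choose ij.1 : ℝ) := by rw [← sum_mul, mul_comm]

theorem abs_inner_pow_apply_le {A : E →L[ℝ] E} (hA : IsSelfAdjoint A) {u v : E} {r : ℝ}
    (h : ∀ k : ℕ, (k : ℝ) < r → ⟪u, (A ^ k) v⟫ = 0) (n : ℕ) :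
    |⟪u, (A ^ n) v⟫| ≤ ‖A‖ ^ n * ‖u‖ * ‖v‖ * binomialTail n r := by
  set B := ‖A‖⁻¹ • A
  have hAB : ‖A‖ • B = A := by
    rcases eq_or_ne ‖A‖ 0 with h0 | h0
    · simp [norm_eq_zero.mp h0]
    · exact smul_inv_smul₀ h0 A
  have hpow (k : ℕ) : A ^ k = ‖A‖ ^ k • B ^ k := by rw [← _root_.smul_pow, hAB]
  have hB1 : ‖B‖ ≤ 1 := by
    rw [norm_smul, norm_inv, norm_norm]
    exact inv_mul_le_one_of_le₀ le_rfl (norm_nonneg _)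
  have hBk (k : ℕ) (hk : (k : ℝ) < r) : ⟪u, (B ^ k) v⟫ = 0 := by
    rw [_root_.smul_pow, smul_apply, inner_smul_right, h k hk, mul_zero]
  calc |⟪u, (A ^ n) v⟫| = ‖A‖ ^ n * |⟪u, (B ^ n) v⟫| := by
        rw [hpow, smul_apply, inner_smul_right, abs_mul, abs_of_nonneg (by positivity)]
    _ ≤ ‖A‖ ^ n * (‖u‖ * ‖v‖ * binomialTail n r) := by
        gcongr
        exact abs_inner_pow_apply_le_of_norm_le_one ((IsSelfAdjoint.all _).smul hA) hB1 hBk n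
    _ = _ := by ring

end CarneVaropoulos

theorem inner_single_one_left {ι : Type*} [DecidableEq ι] (a : ι) (f : ℓ²(ι, ℝ)) :
    ⟪lp.single 2 a 1, f⟫ = f a := by
  simp [lp.inner_single_left]

section MarkovOperator
variable {Γ : Type*} [Group Γ] {μ : Γ → ℝ}

theorem tsum_mul_inv_mul_eq_of_symm (hsymm : ∀ g, μ g⁻¹ = μ g) (F : Γ → ℝ) (x : Γ) :
    ∑' h, F h * μ (h⁻¹ * x) = ∑' g, μ g * F (x * g) := by
  rw [← (Equiv.mulLeft x).tsum_eq]
  refine tsum_congr fun g => ?_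
  rw [Equiv.coe_mulLeft, mul_inv_rev, inv_mul_cancel_right, hsymm, mul_comm]

theorem dist_one_le_of_convolution_pow_ne_zero [MetricSpace Γ]
    (hinv : ∀ g x y : Γ, dist (g * x) (g * y) = dist x y)
    (hsupp : ∀ g, μ g ≠ 0 → dist g 1 ≤ 1) [DecidableEq Γ] {μn : ℕ → Γ → ℝ}
    (hμ0 : ∀ g, μn 0 g = if g = 1 then 1 else 0)
    (hμsucc : ∀ n g, μn (n + 1) g = ∑' h, μn n h * μ (h⁻¹ * g)) {k : ℕ} {y : Γ}
    (hy : μn k y ≠ 0) : dist y 1 ≤ k := by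
  induction k generalizing y with
  | zero =>
    rw [hμ0, ite_ne_right_iff] at hy
    simp [hy.1]
  | succ k ih =>
    rw [hμsucc] at hy
    obtain ⟨b, hb⟩ : ∃ b, μn k b * μ (b⁻¹ * y) ≠ 0 := by
      by_contra! hall
      exact hy (by simp [hall])
    have hyb : dist y b ≤ 1 := by
      rw [← hinv b⁻¹, inv_mul_cancel]
      exact hsupp _ (right_ne_zero_of_mul hb)
    calc dist y 1 ≤ dist y b + dist b 1 := dist_triangle _ _ _
      _ ≤ 1 + k := add_le_add hyb (ih (left_ne_zero_of_mul hb))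
      _ = (k + 1 : ℕ) := by push_cast; ring

variable [DecidableEq Γ] {P : ℓ²(Γ, ℝ) →L[ℝ] ℓ²(Γ, ℝ)}

theorem markov_single_apply (hP : ∀ (f : ℓ²(Γ, ℝ)) x, P f x = ∑' g, μ g * f (x * g))
    (a b : Γ) : P (lp.single 2 a 1) b = μ (b⁻¹ * a) := by
  rw [hP, tsum_eq_single (b⁻¹ * a) fun g hg => ?_]
  · simp
  · rw [lp.single_apply, Pi.single_eq_of_ne, mul_zero]
    rintro rfl
    simp at hg

theorem inner_markov_single (hP : ∀ (f : ℓ²(Γ, ℝ)) x, P f x = ∑' g, μ g * f (x * g))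
    (hsymm : ∀ g, μ g⁻¹ = μ g) (a : Γ) (f : ℓ²(Γ, ℝ)) :
    ⟪P (lp.single 2 a 1), f⟫ = P f a := by
  rw [lp.inner_eq_tsum, hP, ← tsum_mul_inv_mul_eq_of_symm hsymm]
  refine tsum_congr fun b => ?_
  rw [markov_single_apply hP, Real.inner_apply, mul_comm]

theorem isSelfAdjoint_markov (hP : ∀ (f : ℓ²(Γ, ℝ)) x, P f x = ∑' g, μ g * f (x * g))
    (hsymm : ∀ g, μ g⁻¹ = μ g) : IsSelfAdjoint P := by
  rw [ContinuousLinearMap.isSelfAdjoint_iff']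
  ext f a
  rw [← inner_single_one_left, ContinuousLinearMap.adjoint_inner_right,
    inner_markov_single hP hsymm]

theorem markov_pow_single_one_apply (hP : ∀ (f : ℓ²(Γ, ℝ)) x, P f x = ∑' g, μ g * f (x * g))
    (hsymm : ∀ g, μ g⁻¹ = μ g) {μn : ℕ → Γ → ℝ}
    (hμ0 : ∀ g, μn 0 g = if g = 1 then 1 else 0)
    (hμsucc : ∀ n g, μn (n + 1) g = ∑' h, μn n h * μ (h⁻¹ * g)) (k : ℕ) (x : Γ) :
    (P ^ k) (lp.single 2 1 1) x = μn k x := by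
  induction k generalizing x with
  | zero => simp [lp.single_apply, Pi.single_apply, hμ0]
  | succ k ih =>
    rw [pow_succ', mul_apply_eq_comp, hP, hμsucc, tsum_mul_inv_mul_eq_of_symm hsymm]
    exact tsum_congr fun g => by rw [ih]

end MarkovOperator

theorem carne_varopoulos_bound_general
    {Γ : Type*} [Group Γ] [DecidableEq Γ] [MetricSpace Γ]
    (hinv : ∀ g x y : Γ, dist (g * x) (g * y) = dist x y)
    (μ : Γ → ℝ)
    (hsymm : ∀ g : Γ, μ g⁻¹ = μ g)
    (hsupp : ∀ g : Γ, μ g ≠ 0 → dist g 1 ≤ 1)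
    (μn : ℕ → Γ → ℝ)
    (hμ0 : ∀ g : Γ, μn 0 g = if g = 1 then 1 else 0)
    (hμsucc : ∀ (n : ℕ) (g : Γ), μn (n + 1) g = ∑' h : Γ, μn n h * μ (h⁻¹ * g))
    (P : lp (fun _ : Γ => ℝ) 2 →L[ℝ] lp (fun _ : Γ => ℝ) 2)
    (hP : ∀ (f : lp (fun _ : Γ => ℝ) 2) (x : Γ), P f x = ∑' g : Γ, μ g * f (x * g))
    (n : ℕ) (g : Γ) (hg : dist g 1 ≤ n) :
    μn n g ≤ 2 * ‖P‖ ^ n * Real.exp (-((n : ℝ) / 2) *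
      ((1 + dist g 1 / n) * Real.log (1 + dist g 1 / n) +
        (1 - dist g 1 / n) * Real.log (1 - dist g 1 / n))) := by
  have hμn (k : ℕ) : ⟪lp.single 2 g 1, (P ^ k) (lp.single 2 1 1)⟫ = μn k g := by
    rw [inner_single_one_left, markov_pow_single_one_apply hP hsymm hμ0 hμsucc]
  have hfar (k : ℕ) (hk : (k : ℝ) < dist g 1) :
      ⟪lp.single 2 g 1, (P ^ k) (lp.single 2 1 1)⟫ = 0 := by
    rw [hμn]
    by_contra hne
    exact hk.not_ge (dist_one_le_of_convolution_pow_ne_zero hinv hsupp hμ0 hμsucc hne)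
  have hnorm (a : Γ) : ‖(lp.single 2 a 1 : ℓ²(Γ, ℝ))‖ = 1 := by simp [lp.norm_single]
  calc μn n g ≤ |⟪lp.single 2 g 1, (P ^ n) (lp.single 2 1 1)⟫| := hμn n ▸ le_abs_self _
    _ ≤ ‖P‖ ^ n * binomialTail n (dist g 1) := by
        simpa only [hnorm, mul_one] using
          abs_inner_pow_apply_le (isSelfAdjoint_markov hP hsymm) hfar n
    _ ≤ ‖P‖ ^ n * (2 * Real.exp (-(n / 2) * carneRate (dist g 1 / n))) := by
        gcongr
        exact binomialTail_le_exp_carneRate n dist_nonneg hg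
    _ = _ := by rw [carneRate]; ring

/-- **Carne–Varopoulos type bound.** For a symmetric probability measure
supported in the ball of radius `1`, `μ^{*n}(g) ≤ 2 ‖P‖ⁿ exp(-(n/2) A(|g|/n))` whenever
`|g| ≤ n`, where `A(x) = (1+x) log (1+x) + (1-x) log (1-x)`. -/
theorem carne_varopoulos_bound
    {Γ : Type*} [Group Γ] [Countable Γ] [DecidableEq Γ] [MetricSpace Γ]
    (hinv : ∀ g x y : Γ, dist (g * x) (g * y) = dist x y)
    (hproper : ∀ r : ℝ, (Metric.closedBall (1 : Γ) r).Finite)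
    (μ : Γ → ℝ) (hpos : ∀ g, 0 ≤ μ g) (hprob : HasSum μ 1)
    (hsymm : ∀ g : Γ, μ g⁻¹ = μ g)
    (hsupp : ∀ g : Γ, μ g ≠ 0 → dist g 1 ≤ 1)
    (μn : ℕ → Γ → ℝ)
    (hμ0 : ∀ g : Γ, μn 0 g = if g = 1 then 1 else 0)
    (hμsucc : ∀ (n : ℕ) (g : Γ), μn (n + 1) g = ∑' h : Γ, μn n h * μ (h⁻¹ * g))
    (P : lp (fun _ : Γ => ℝ) 2 →L[ℝ] lp (fun _ : Γ => ℝ) 2)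
    (hP : ∀ (f : lp (fun _ : Γ => ℝ) 2) (x : Γ), P f x = ∑' g : Γ, μ g * f (x * g))
    (n : ℕ) (hn : 1 ≤ n) (g : Γ) (hg : dist g 1 ≤ n) :
    μn n g ≤ 2 * ‖P‖ ^ n * Real.exp (-((n : ℝ) / 2) *
      ((1 + dist g 1 / n) * Real.log (1 + dist g 1 / n) +
        (1 - dist g 1 / n) * Real.log (1 - dist g 1 / n))) :=
  carne_varopoulos_bound_general hinv μ hsymm hsupp μn hμ0 hμsucc P hP n g hg
end

section
/- Let Γ be a countable group, μ a symmetric probability measure on Γ, and (B,ν) a probability space with a measurable Γ-action such that, for every γ ∈ Γ, the pushforward (γ⁻¹)_*ν is absolutely continuous with respect to ν, with Radon–Nikodym derivative c(γ,·) = d((γ⁻¹)_*ν)/dν. Define the measure m on Γ × B by ∫φ dm = Σ_γ μ(γ)·∫_B φ(γ,ξ)·(1+c(γ,ξ))/2 dν(ξ). Then m is a probability measure, and m is invariant under the involution (γ,ξ) ↦ (γ⁻¹, γξ): for every bounded measurable φ : Γ × B → ℝ, Σ_γ μ(γ)·∫_B φ(γ,ξ)·(1+c(γ,ξ))/2 dν(ξ)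 = Σ_γ μ(γ)·∫_B φ(γ⁻¹,γξ)·(1+c(γ,ξ))/2 dν(ξ). -/
open MeasureTheory

/-- The measure `dm = (1+c)/2 dμ dν` on `Γ × B` is a probability
measure, and it is invariant under the flip involution `(γ,ξ) ↦ (γ⁻¹, γξ)`. -/
theorem flip_invariant_measure
    {Γ : Type*} [Group Γ] [Countable Γ]
    (μ : Γ → ℝ) (hpos : ∀ g, 0 ≤ μ g) (hprob : HasSum μ 1)
    (hsymm : ∀ g : Γ, μ g⁻¹ = μ g)
    {B : Type*} [MeasurableSpace B] [MulAction Γ B]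
    (hmeas : ∀ γ : Γ, Measurable fun ξ : B => γ • ξ)
    (ν : Measure B) [IsProbabilityMeasure ν]
    (hqi : ∀ γ : Γ, ν.map (fun ξ => γ⁻¹ • ξ) ≪ ν)
    (c : Γ → B → ℝ)
    (hc : ∀ γ : Γ, c γ = fun ξ => ((ν.map (fun ξ => γ⁻¹ • ξ)).rnDeriv ν ξ).toReal) :
    (∑' γ : Γ, μ γ * ∫ ξ, (1 + c γ ξ) / 2 ∂ν) = 1 ∧
      ∀ φ : Γ → B → ℝ, (∀ γ, Measurable (φ γ)) → (∃ C : ℝ, ∀ γ ξ, |φ γ ξ| ≤ C) →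
        ∑' γ : Γ, μ γ * ∫ ξ, φ γ ξ * ((1 + c γ ξ) / 2) ∂ν =
          ∑' γ : Γ, μ γ * ∫ ξ, φ γ⁻¹ (γ • ξ) * ((1 + c γ ξ) / 2) ∂ν := by
  -- the pushforward measures are probability measures
  have hprobmap : ∀ γ : Γ, IsProbabilityMeasure (ν.map (fun ξ => γ⁻¹ • ξ)) := fun γ =>
    Measure.isProbabilityMeasure_map (hmeas γ⁻¹).aemeasurable
  -- integral of c is 1
  have hcint : ∀ γ : Γ, ∫ ξ, c γ ξ ∂ν = 1 := by
    intro γ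
    have := hprobmap γ
    rw [hc γ]
    rw [Measure.integral_toReal_rnDeriv (hqi γ)]
    simp
  have hcmeas : ∀ γ : Γ, Measurable (c γ) := by
    intro γ
    rw [hc γ]
    exact (Measure.measurable_rnDeriv _ _).ennreal_toReal
  have hcnn : ∀ γ (ξ : B), 0 ≤ c γ ξ := by
    intro γ ξ; rw [hc γ]; exact ENNReal.toReal_nonneg
  have hcI : ∀ γ : Γ, Integrable (c γ) ν := by
    intro γ
    have := hprobmap γ
    rw [hc γ]
    exact Measure.integrable_toReal_rnDeriv
  -- change of variables
  have key : ∀ (γ : Γ) (f : B → ℝ), Measurable f →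
      ∫ ξ, f ξ * c γ ξ ∂ν = ∫ ξ, f (γ⁻¹ • ξ) ∂ν := by
    intro γ f hf
    have := hprobmap γ
    have h1 : ∫ ξ, f (γ⁻¹ • ξ) ∂ν = ∫ ξ, f ξ ∂(ν.map (fun ξ => γ⁻¹ • ξ)) :=
      (integral_map (hmeas γ⁻¹).aemeasurable hf.aestronglyMeasurable).symm
    rw [h1, ← integral_rnDeriv_smul (hqi γ)]
    refine integral_congr_ae (Filter.Eventually.of_forall fun ξ => ?_)
    rw [hc γ]; simp [mul_comm, smul_eq_mul]
  -- first part
  have h1 : ∀ γ : Γ, ∫ ξ, (1 + c γ ξ) / 2 ∂ν = 1 := by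
    intro γ
    have : ∫ ξ, (1 + c γ ξ) / 2 ∂ν = (∫ ξ, (1 : ℝ) + c γ ξ ∂ν) / 2 := by
      rw [integral_div]
    rw [this, integral_add (integrable_const 1) (hcI γ), hcint γ]
    simp
  constructor
  · simp only [h1, mul_one]
    exact hprob.tsum_eq
  · rintro φ hφm ⟨C, hφb⟩
    -- C ≥ 0
    have hBne : Nonempty B := by
      by_contra h
      have : (ν Set.univ) = 0 := by
        have : (Set.univ : Set B) = ∅ := by
          ext x; exact absurd ⟨x⟩ h
        simp [this]
      simp [measure_univ] at this
    obtain ⟨ξ₀⟩ := hBne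
    have hC : 0 ≤ C := le_trans (abs_nonneg _) (hφb 1 ξ₀)
    -- integrability of φ γ
    have hφI : ∀ γ : Γ, Integrable (φ γ) ν := by
      intro γ
      refine Integrable.mono' (integrable_const C) (hφm γ).aestronglyMeasurable
        (Filter.Eventually.of_forall fun ξ => hφb γ ξ)
    have hφcI : ∀ γ δ : Γ, Integrable (fun ξ => φ γ ξ * c δ ξ) ν := by
      intro γ δ
      refine Integrable.mono' ((hcI δ).const_mul C)
        ((hφm γ).mul (hcmeas δ)).aestronglyMeasurable
        (Filter.Eventually.of_forall fun ξ => ?_)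
      rw [Real.norm_eq_abs, abs_mul, abs_of_nonneg (hcnn δ ξ)]
      exact mul_le_mul_of_nonneg_right (hφb γ ξ) (hcnn δ ξ)
    -- per-γ identity
    have main : ∀ γ : Γ, μ γ * ∫ ξ, φ γ⁻¹ (γ • ξ) * ((1 + c γ ξ) / 2) ∂ν =
        μ γ⁻¹ * ∫ ξ, φ γ⁻¹ ξ * ((1 + c γ⁻¹ ξ) / 2) ∂ν := by
      intro γ
      have hmg : Measurable (fun ξ : B => φ γ⁻¹ (γ • ξ)) := (hφm γ⁻¹).comp (hmeas γ)
      -- second piece: ∫ φ γ⁻¹ (γ•ξ) * c γ ξ = ∫ φ γ⁻¹ ξ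
      have e2 : ∫ ξ, φ γ⁻¹ (γ • ξ) * c γ ξ ∂ν = ∫ ξ, φ γ⁻¹ ξ ∂ν := by
        rw [key γ _ hmg]
        refine integral_congr_ae (Filter.Eventually.of_forall fun ξ => ?_)
        simp only [smul_inv_smul]
      -- first piece: ∫ φ γ⁻¹ (γ•ξ) = ∫ φ γ⁻¹ ξ * c γ⁻¹ ξ
      have e1 : ∫ ξ, φ γ⁻¹ (γ • ξ) ∂ν = ∫ ξ, φ γ⁻¹ ξ * c γ⁻¹ ξ ∂ν := by
        rw [key γ⁻¹ _ (hφm γ⁻¹)]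
        simp only [inv_inv]
      have expand : ∀ (a b : ℝ), a * ((1 + b) / 2) = (a + a * b) / 2 := by
        intro a b; ring
      have hI1 : Integrable (fun ξ => φ γ⁻¹ (γ • ξ)) ν :=
        Integrable.mono' (integrable_const C) hmg.aestronglyMeasurable
          (Filter.Eventually.of_forall fun ξ => hφb _ _)
      have hI2 : Integrable (fun ξ => φ γ⁻¹ (γ • ξ) * c γ ξ) ν := by
        refine Integrable.mono' ((hcI γ).const_mul C)
          (hmg.mul (hcmeas γ)).aestronglyMeasurable
          (Filter.Eventually.of_forall fun ξ => ?_)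
        rw [Real.norm_eq_abs, abs_mul, abs_of_nonneg (hcnn γ ξ)]
        exact mul_le_mul_of_nonneg_right (hφb _ _) (hcnn γ ξ)
      calc μ γ * ∫ ξ, φ γ⁻¹ (γ • ξ) * ((1 + c γ ξ) / 2) ∂ν
          = μ γ * ((∫ ξ, φ γ⁻¹ (γ • ξ) ∂ν + ∫ ξ, φ γ⁻¹ (γ • ξ) * c γ ξ ∂ν) / 2) := by
            congr 1
            simp_rw [expand]
            rw [integral_div, integral_add hI1 hI2]
        _ = μ γ⁻¹ * ((∫ ξ, φ γ⁻¹ ξ * c γ⁻¹ ξ ∂ν + ∫ ξ, φ γ⁻¹ ξ ∂ν) / 2) := by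
            rw [e1, e2, hsymm]
        _ = μ γ⁻¹ * ∫ ξ, φ γ⁻¹ ξ * ((1 + c γ⁻¹ ξ) / 2) ∂ν := by
            congr 1
            simp_rw [expand]
            rw [integral_div, integral_add (hφI γ⁻¹) (hφcI γ⁻¹ γ⁻¹), add_comm]
    calc ∑' γ : Γ, μ γ * ∫ ξ, φ γ ξ * ((1 + c γ ξ) / 2) ∂ν
        = ∑' γ : Γ, μ γ⁻¹ * ∫ ξ, φ γ⁻¹ ξ * ((1 + c γ⁻¹ ξ) / 2) ∂ν :=
          ((Equiv.inv Γ).tsum_eq (fun γ => μ γ * ∫ ξ, φ γ ξ * ((1 + c γ ξ) / 2) ∂ν)).symm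
      _ = ∑' γ : Γ, μ γ * ∫ ξ, φ γ⁻¹ (γ • ξ) * ((1 + c γ ξ) / 2) ∂ν := by
          exact (tsum_congr main).symm
end
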